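/- With the above notation, let m = (m_1,…,m_r) be a dominant tuple of integers and let 1 ≤ k ≤ r be such that m + e_k is dominant (i.e., k = 1 or m_{k−1} > m_k). Then A(m,k) ≠ 0. -/

import Mathlib

open Finset

/-- A tuple of integers is dominant if its entries are weakly decreasing and nonnegative. -/
def Dominant {r : ℕ} (m : Fin r → ℤ) : Prop :=
  (∀ j k : Fin r, j ≤ k → m k ≤ m j) ∧ ∀ j : Fin r, 0 ≤ m j

instance {r : ℕ} (m : Fin r → ℤ) : Decidable (Dominant m) := by
  unfold Dominant; infer_instance

/-- The genus `p = (e+1) + (r-1)d + b/2`. -/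
noncomputable def genusP (r : ℕ) (b d e : ℝ) : ℝ := (e + 1) + ((r : ℝ) - 1) * d + b / 2

/-- `n = r(p + b/2)`. -/
noncomputable def dimN (r : ℕ) (b d e : ℝ) : ℝ := r * (genusP r b d e + b / 2)

/-- `ρ_k = (r-k)d/2 + e/2 + b/4` (1-indexed `k`). -/
noncomputable def rho (r : ℕ) (b d e : ℝ) (k : Fin r) : ℝ :=
  ((r : ℝ) - ((k : ℕ) + 1)) * d / 2 + e / 2 + b / 4

/-- The coefficient `A(m,k)`. -/
noncomputable def Acoef (r : ℕ) (b d e : ℝ) (m : Fin r → ℤ) (k : Fin r) : ℝ :=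
  (genusP r b d e / (2 * dimN r b d e)) *
    ((2 * ((m k : ℝ) + rho r b d e k) + b / 2 + 1) *
        (2 * ((m k : ℝ) + rho r b d e k) + b / 2 + e)) /
      ((2 * ((m k : ℝ) + rho r b d e k)) * (2 * ((m k : ℝ) + rho r b d e k) + 1)) *
    ∏ j ∈ univ.erase k,
      ((((m k : ℝ) + rho r b d e k) - ((m j : ℝ) + rho r b d e j) + d / 2) *
          (((m k : ℝ) + rho r b d e k) + ((m j : ℝ) + rho r b d e j) + d / 2)) /
        ((((m k : ℝ) + rho r b d e k) - ((m j : ℝ) + rho r b d e j)) *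
          (((m k : ℝ) + rho r b d e k) + ((m j : ℝ) + rho r b d e j)))

/-- The coefficient `B(m,k)`. -/
noncomputable def Bcoef (r : ℕ) (b d e : ℝ) (m : Fin r → ℤ) (k : Fin r) : ℝ :=
  (genusP r b d e / (2 * dimN r b d e)) *
    ((2 * ((m k : ℝ) + rho r b d e k) - b / 2 - 1) *
        (2 * ((m k : ℝ) + rho r b d e k) - b / 2 - e)) /
      ((2 * ((m k : ℝ) + rho r b d e k)) * (2 * ((m k : ℝ) + rho r b d e k) - 1)) *
    ∏ j ∈ univ.erase k,
      ((((m k : ℝ) + rho r b d e k) + ((m j : ℝ) + rho r b d e j) - d / 2) *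
          (((m k : ℝ) + rho r b d e k) - ((m j : ℝ) + rho r b d e j) - d / 2)) /
        ((((m k : ℝ) + rho r b d e k) + ((m j : ℝ) + rho r b d e j)) *
          (((m k : ℝ) + rho r b d e k) - ((m j : ℝ) + rho r b d e j)))

/-- The coefficient `C(m)`. -/
noncomputable def Ccoef (r : ℕ) (b d e : ℝ) (m : Fin r → ℤ) : ℝ :=
  1 - (∑ k ∈ univ.filter (fun k : Fin r =>
        Dominant (fun j => m j + if j = k then 1 else 0)), Acoef r b d e m k)
    - (∑ k ∈ univ.filter (fun k : Fin r =>
        Dominant (fun j => m j - if j = k then 1 else 0)), Bcoef r b d e m k)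

/-!
Write `x_j = m_j + ρ_j`. All `x_j` are positive, so every factor of `A(m,k)` not involving a
difference `x_k - x_j` is positive. For `j ≠ k` the two differences `x_k - x_j` and
`x_k - x_j + d/2` have the same sign: since `ρ_k - ρ_j = (j - k) d/2`, for `k < j` dominance of `m`
gives `x_k - x_j ≥ d/2 > 0`, while for `j < k` dominance of `m + e_k` gives `m_j ≥ m_k + 1` and so
`x_k - x_j + d/2 ≤ -1`. Hence `A(m,k) > 0`.
-/

lemma natCast_sub_mul_nonneg {r i : ℕ} {d : ℝ} (hd : 1 < r → 0 ≤ d) (hi₁ : 1 ≤ i) (hir : i ≤ r) :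
    0 ≤ ((r : ℝ) - i) * d := by
  rcases hir.eq_or_lt with rfl | hlt
  · simp
  · exact mul_nonneg (sub_nonneg.2 (by exact_mod_cast hir)) (hd (by omega))

lemma Dominant.add_one_le_of_lt {r : ℕ} {m : Fin r → ℤ} {j k : Fin r}
    (hk : Dominant (fun i => m i + if i = k then 1 else 0)) (hjk : j < k) : m k + 1 ≤ m j := by
  simpa [hjk.ne] using hk.1 j k hjk.le

lemma add_mul_add_div_mul_pos_of_same_sign {u s δ : ℝ} (hs : 0 < s) (hδ : 0 ≤ δ) (hu : 0 < u ∨ u + δ < 0) :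
    0 < (u + δ) * (s + δ) / (u * s) := by
  rcases hu with hu | hu
  · positivity
  · exact div_pos_of_neg_of_neg (mul_neg_of_neg_of_pos hu (by positivity))
      (mul_neg_of_neg_of_pos (by linarith) hs)

section

variable {r : ℕ} {b d e : ℝ}

lemma genusP_pos (hr : 1 ≤ r) (hb : 0 ≤ b) (he : 0 ≤ e) (hd : 1 < r → 0 ≤ d) :
    0 < genusP r b d e := by
  have := natCast_sub_mul_nonneg hd le_rfl hr
  rw [genusP]
  push_cast at this
  linarith

lemma dimN_pos (hr : 1 ≤ r) (hb : 0 ≤ b) (he : 0 ≤ e) (hd : 1 < r → 0 ≤ d) :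
    0 < dimN r b d e := by
  have := genusP_pos hr hb he hd
  have : (0 : ℝ) < r := by exact_mod_cast hr
  rw [dimN]
  positivity

lemma rho_pos (hb : 0 < b) (he : 0 ≤ e) (hd : 1 < r → 0 ≤ d) (k : Fin r) :
    0 < rho r b d e k := by
  have := natCast_sub_mul_nonneg hd (Nat.le_add_left 1 k) k.isLt
  rw [rho]
  push_cast at this
  linarith

lemma rho_sub_rho (j k : Fin r) : rho r b d e k - rho r b d e j = ((j : ℝ) - k) * d / 2 := by
  simp only [rho]
  ring

variable {m : Fin r → ℤ} {k : Fin r}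

lemma add_rho_pos (hb : 0 < b) (he : 0 ≤ e) (hd : 1 < r → 0 ≤ d) (hm : Dominant m) (j : Fin r) :
    0 < (m j : ℝ) + rho r b d e j := by
  have : (0 : ℝ) ≤ m j := by exact_mod_cast hm.2 j
  linarith [rho_pos hb he hd j]

lemma add_rho_sub_add_rho_same_sign (hd : 0 < d) (hm : Dominant m)
    (hk : Dominant (fun i => m i + if i = k then 1 else 0)) {j : Fin r} (hjk : j ≠ k) :
    0 < ((m k : ℝ) + rho r b d e k) - ((m j : ℝ) + rho r b d e j) ∨
      ((m k : ℝ) + rho r b d e k) - ((m j : ℝ) + rho r b d e j) + d / 2 < 0 := by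
  have hρ := rho_sub_rho (b := b) (d := d) (e := e) j k
  rcases hjk.lt_or_gt with hlt | hgt
  · right
    have hm' : (m k : ℝ) + 1 ≤ m j := by exact_mod_cast hk.add_one_le_of_lt hlt
    have hjk' : (j : ℝ) + 1 ≤ k := by exact_mod_cast hlt
    nlinarith
  · left
    have hm' : (m j : ℝ) ≤ m k := by exact_mod_cast hm.1 k j hgt.le
    have hjk' : (k : ℝ) + 1 ≤ j := by exact_mod_cast hgt
    nlinarith

theorem Acoef_pos (hb : 0 < b) (he : 0 ≤ e) (hd : 1 < r → 0 < d) (hm : Dominant m)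
    (hk : Dominant (fun i => m i + if i = k then 1 else 0)) : 0 < Acoef r b d e m k := by
  have hd₀ : 1 < r → 0 ≤ d := fun hr => (hd hr).le
  have hx := add_rho_pos hb he hd₀ hm
  have hxk := hx k
  have hpn : 0 < genusP r b d e / (2 * dimN r b d e) :=
    div_pos (genusP_pos k.pos hb.le he hd₀) (mul_pos two_pos (dimN_pos k.pos hb.le he hd₀))
  rw [Acoef]
  refine mul_pos (by positivity) (Finset.prod_pos fun j hj => ?_)
  have hjk := Finset.ne_of_mem_erase hj
  have hd_pos : 0 < d := hd (by omega)
  exact add_mul_add_div_mul_pos_of_same_sign (by linarith [hx j]) (by positivity)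
    (add_rho_sub_add_rho_same_sign hd_pos hm hk hjk)

end

theorem Acoef_ne_zero_of_dominant_add (r : ℕ) (b d e : ℝ)
    (hb : 1 ≤ b) (he : 0 ≤ e) (hd : 1 < r → 1 ≤ d)
    (m : Fin r → ℤ) (hm : Dominant m) (k : Fin r)
    (hk : Dominant (fun j => m j + if j = k then 1 else 0)) :
    Acoef r b d e m k ≠ 0 :=
  (Acoef_pos (zero_lt_one.trans_le hb) he (fun hr => zero_lt_one.trans_le (hd hr)) hm hk).ne'
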